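/- Let D be a digraph with no induced blocking odd cycle, and let v be a universal vertex of D. If D − v satisfies the BE-property, then D satisfies the BE-property. -/

import Mathlib

open Relation

variable {V : Type*}

/-- `u` and `v` are adjacent in the digraph with arc relation `A`. -/
def DAdj (A : V → V → Prop) (u v : V) : Prop := A u v ∨ A v u

/-- `v` is a source: no arc enters `v`. -/
def IsSource (A : V → V → Prop) (v : V) : Prop := ∀ u, ¬ A u v

/-- `v` is a sink: no arc leaves `v`. -/
def IsSink (A : V → V → Prop) (v : V) : Prop := ∀ u, ¬ A v u

/-- A stable (independent) set of the digraph. -/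
def IsStable (A : V → V → Prop) (S : Set V) : Prop :=
  ∀ u ∈ S, ∀ v ∈ S, u ≠ v → ¬ DAdj A u v

/-- The stability number. -/
noncomputable def alphaNum (A : V → V → Prop) : ℕ :=
  sSup {n | ∃ S : Set V, IsStable A S ∧ S.ncard = n}

/-- A maximum stable set. -/
def IsMaxStable (A : V → V → Prop) (S : Set V) : Prop :=
  IsStable A S ∧ ∀ T : Set V, IsStable A T → T.ncard ≤ S.ncard

/-- A (nonempty) directed path, given as its list of vertices. -/
def IsDiPath (A : V → V → Prop) (l : List V) : Prop :=
  l ≠ [] ∧ l.Nodup ∧ l.Chain' A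

/-- A path partition of the digraph: every vertex lies on exactly one of the paths. -/
def IsPathPartition (A : V → V → Prop) (P : Set (List V)) : Prop :=
  (∀ l ∈ P, IsDiPath A l) ∧ ∀ v : V, ∃! l, l ∈ P ∧ v ∈ l

/-- An `S`-path partition: each path contains exactly one vertex of `S`. -/
def IsSPartition (A : V → V → Prop) (S : Set V) (P : Set (List V)) : Prop :=
  IsPathPartition A P ∧ ∀ l ∈ P, ∃! s, s ∈ l ∧ s ∈ S

/-- An `S`-BE-path partition: each path contains exactly one vertex of `S`,
which is moreover an endpoint of the path. -/
def IsBEPartition (A : V → V → Prop) (S : Set V) (P : Set (List V)) : Prop :=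
  IsSPartition A S P ∧
    ∀ l ∈ P, ∀ s ∈ l, s ∈ S → l.head? = some s ∨ l.getLast? = some s

/-- The α-property: every maximum stable set admits an `S`-path partition. -/
def AlphaProperty (A : V → V → Prop) : Prop :=
  ∀ S : Set V, IsMaxStable A S → ∃ P, IsSPartition A S P

/-- The BE-property: every maximum stable set admits an `S`-BE-path partition. -/
def BEProperty (A : V → V → Prop) : Prop :=
  ∀ S : Set V, IsMaxStable A S → ∃ P, IsBEPartition A S P

/-- α-diperfect: every induced subdigraph satisfies the α-property. -/
def AlphaDiperfect (A : V → V → Prop) : Prop :=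
  ∀ W : Set V, AlphaProperty (fun a b : W => A a.1 b.1)

/-- BE-diperfect: every induced subdigraph satisfies the BE-property. -/
def BEDiperfect (A : V → V → Prop) : Prop :=
  ∀ W : Set V, BEProperty (fun a b : W => A a.1 b.1)

/-- Mutual reachability. -/
def MutReach (A : V → V → Prop) (u v : V) : Prop :=
  ReflTransGen A u v ∧ ReflTransGen A v u

/-- Semicomplete digraph: any two distinct vertices are adjacent. -/
def Semicomplete (A : V → V → Prop) : Prop :=
  ∀ u v : V, u ≠ v → DAdj A u v

/-- Strongly connected digraph. -/
def Strong (A : V → V → Prop) : Prop :=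
  ∀ u v : V, ReflTransGen A u v

/-- The digraph has an induced transitive triangle. -/
def HasInducedTransitiveTriangle (A : V → V → Prop) : Prop :=
  ∃ a b c : V, a ≠ b ∧ a ≠ c ∧ b ≠ c ∧
    A a b ∧ A a c ∧ A c b ∧ ¬ A b a ∧ ¬ A c a ∧ ¬ A b c

/-- The digraph is a blocking odd cycle: its underlying graph is an odd cycle
`x_1 x_2 ⋯ x_{2k+1} x_1` (with `k ≥ 1`; here `x i` is `x_{i+1}`), and both `x_1`
and `x_2` are each a source or a sink. -/
def IsBlockingOddCycle (A : V → V → Prop) : Prop :=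
  ∃ (k : ℕ) (x : ZMod (2 * k + 1) → V), 1 ≤ k ∧ Function.Bijective x ∧
    (∀ i j, DAdj A (x i) (x j) ↔ (j = i + 1 ∨ i = j + 1)) ∧
    (IsSource A (x 0) ∨ IsSink A (x 0)) ∧
    (IsSource A (x 1) ∨ IsSink A (x 1))

/-- The digraph is an anti-directed odd cycle: its underlying graph is an odd cycle
`x_1 ⋯ x_{2k+1} x_1` with `k ≥ 2` (here `x m` is `x_{m+1}`), and each of
`x_1, x_2, x_3, x_4, x_6, x_8, …, x_{2k}` is a source or a sink. -/
def IsAntiDirectedOddCycle (A : V → V → Prop) : Prop :=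
  ∃ (k : ℕ) (x : ZMod (2 * k + 1) → V), 2 ≤ k ∧ Function.Bijective x ∧
    (∀ i j, DAdj A (x i) (x j) ↔ (j = i + 1 ∨ i = j + 1)) ∧
    ∀ m : ℕ, m ≤ 2 * k →
      (m ≤ 3 ∨ (5 ≤ m ∧ m ≤ 2 * k - 1 ∧ Odd m)) →
      (IsSource A (x (m : ZMod (2 * k + 1))) ∨ IsSink A (x (m : ZMod (2 * k + 1))))

/-- `v` is a universal vertex. -/
def IsUniversal (A : V → V → Prop) (v : V) : Prop := ∀ u, u ≠ v → DAdj A u v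

/-- The underlying simple graph of a digraph. -/
def underlyingGraph (A : V → V → Prop) : SimpleGraph V where
  Adj u v := u ≠ v ∧ DAdj A u v
  symm := ⟨fun _ _ h => ⟨h.1.symm, h.2.symm⟩⟩
  loopless := ⟨fun _ h => h.1 rfl⟩

/-- The underlying graph of the digraph is a cycle. -/
def UnderlyingIsCycle (A : V → V → Prop) : Prop :=
  ∃ (n : ℕ) (x : ZMod n → V), 3 ≤ n ∧ Function.Bijective x ∧
    ∀ i j, DAdj A (x i) (x j) ↔ (j = i + 1 ∨ i = j + 1)

/-- A perfect graph: every induced subgraph has chromatic number equal to its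
clique number. -/
def GraphPerfect (G : SimpleGraph V) : Prop :=
  ∀ W : Set V, (G.induce W).chromaticNumber = ((G.induce W).cliqueNum : ℕ∞)

/-- A Hamilton directed path whose endpoints are `{s, t}` (in some order). -/
def HamiltonPathBetween (A : V → V → Prop) (s t : V) : Prop :=
  ∃ l : List V, IsDiPath A l ∧ (∀ v : V, v ∈ l) ∧
    ((l.head? = some s ∧ l.getLast? = some t) ∨
      (l.head? = some t ∧ l.getLast? = some s))

/-- A Hamilton directed path starting at `s` and ending at `t`. -/
def HamiltonPathFromTo (A : V → V → Prop) (s t : V) : Prop :=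
  ∃ l : List V, IsDiPath A l ∧ (∀ v : V, v ∈ l) ∧
    l.head? = some s ∧ l.getLast? = some t

/-- The exceptional strong semicomplete digraph on four vertices
(`a,b,c,d = 0,1,2,3`): the 4-cycle `a→d→c→b→a` together with digons `a↔c`, `b↔d`. -/
def BadFour : Fin 4 → Fin 4 → Prop := fun u v =>
  (u, v) ∈ ({(0,3), (3,2), (2,1), (1,0), (0,2), (2,0), (1,3), (3,1)} :
    Set (Fin 4 × Fin 4))

/-- A locally in-semicomplete digraph: any two in-neighbours of a vertex are adjacent. -/
def LocallyInSemicomplete (A : V → V → Prop) : Prop :=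
  ∀ v u w : V, A u v → A w v → u ≠ w → DAdj A u w

/-- A strong component: a maximal set of pairwise mutually reachable vertices. -/
def IsStrongComponent (A : V → V → Prop) (X : Set V) : Prop :=
  X.Nonempty ∧ (∀ u ∈ X, ∀ v ∈ X, MutReach A u v) ∧
    ∀ u v, v ∈ X → MutReach A u v → u ∈ X

/-- `C` is the vertex set of an induced cycle of `G`. -/
def InducedCycleSet (G : SimpleGraph V) (C : Set V) : Prop :=
  ∃ (n : ℕ) (x : ZMod n → V), 3 ≤ n ∧ Function.Injective x ∧ Set.range x = C ∧
    ∀ i j, G.Adj (x i) (x j) ↔ (j = i + 1 ∨ i = j + 1)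

/-- `G` contains a subdivision of `K₄`: four branch vertices joined by
pairwise internally disjoint paths. -/
def HasK4Subdivision (G : SimpleGraph V) : Prop :=
  ∃ (b : Fin 4 → V) (P : ∀ i j : Fin 4, G.Walk (b i) (b j)),
    Function.Injective b ∧
    (∀ i j, i ≠ j → (P i j).IsPath) ∧
    (∀ i j m, i ≠ j → b m ∈ (P i j).support → m = i ∨ m = j) ∧
    (∀ i j k l, i ≠ j → k ≠ l → ({i, j} : Finset (Fin 4)) ≠ {k, l} →
      ∀ v, v ∈ (P i j).support → v ∈ (P k l).support →
        (v = b i ∨ v = b j) ∧ (v = b k ∨ v = b l))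

/-- 2-connected: connected, at least 3 vertices, and no cut vertex. -/
def TwoConnected (G : SimpleGraph V) : Prop :=
  G.Connected ∧ 3 ≤ Nat.card V ∧
    ∀ v : V, (G.induce {u | u ≠ v}).Preconnected

/-!
If `v ∈ S`, then `S = {v}`, so `D` is semicomplete and an `S'`-path partition of `D - v` for a
singleton `S'` is a single Hamilton path `f ⋯ z`. Attach `v` at one of its ends; if neither arc
`z → v` nor `v → f` exists, then `f → v → z`, and since `{f, v, z}` is not a transitive triangle
(a blocking triangle) we get `z → f`, so the path can be reopened at `f` and `v` appended.

If `v ∉ S`, then `S` is a maximum stable set of `D - v`. Take the path of an `S_BE`-path partition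
of `D - v` through some `s ∈ S`, say starting at `s`, and put `v` right after the last vertex `x`
of the path with an arc `x → v`. If there is no such vertex, `v` dominates the whole path;
excluding transitive triangles forces every arc of the path to be a digon, so `v` followed by the
reversed path ends at `s`.
-/

namespace List

variable {α β : Type*}

def IsEndpoint (l : List α) (a : α) : Prop := l.head? = some a ∨ l.getLast? = some a

theorem IsEndpoint.map {l : List α} {a : α} (h : l.IsEndpoint a) (f : α → β) :
    (l.map f).IsEndpoint (f a) := by
  rw [IsEndpoint, head?_map, getLast?_map]
  rcases h with h | h <;> simp [h]

theorem IsEndpoint.reverse {l : List α} {a : α} (h : l.IsEndpoint a) : l.reverse.IsEndpoint a := by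
  rw [IsEndpoint, head?_reverse, getLast?_reverse]
  exact h.symm

end List

namespace HasInducedTransitiveTriangle

variable {A : V → V → Prop}

theorem exists_isBlockingOddCycle (hirr : ∀ x, ¬ A x x) (h : HasInducedTransitiveTriangle A) :
    ∃ W : Set V, IsBlockingOddCycle (fun x y : W => A x.1 y.1) := by
  obtain ⟨a, b, c, hab, hac, hbc, hAab, hAac, hAcb, hAba, hAca, hAbc⟩ := h
  have hinj : Function.Injective ![a, b, c] := by
    intro i j hij
    fin_cases i <;> fin_cases j <;> simp_all [eq_comm]
  have hadj : ∀ i j : Fin 3, DAdj A (![a, b, c] i) (![a, b, c] j) ↔ i ≠ j := by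
    intro i j
    fin_cases i <;> fin_cases j <;> simp_all [DAdj]
  have hcyc : ∀ i j : ZMod (2 * 1 + 1), (j = i + 1 ∨ i = j + 1) ↔ i ≠ j := by decide
  -- `ZMod (2 * 1 + 1)` is `Fin 3` by definition, so `hadj` applies to it.
  refine ⟨_, 1, Set.rangeFactorization ![a, b, c], le_rfl,
    ⟨Set.rangeFactorization_injective.2 hinj, Set.rangeFactorization_surjective⟩,
    fun i j => (hadj i j).trans (hcyc i j).symm, Or.inl ?_, Or.inr ?_⟩
  · rintro ⟨_, i, rfl⟩
    fin_cases i <;> simp_all [Set.rangeFactorization]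
  · rintro ⟨_, i, rfl⟩
    fin_cases i <;> simp_all [Set.rangeFactorization]

theorem of_flip (h : HasInducedTransitiveTriangle (fun a b => A b a)) :
    HasInducedTransitiveTriangle A := by
  obtain ⟨a, b, c, hab, hac, hbc, h₁, h₂, h₃, h₄, h₅, h₆⟩ := h
  exact ⟨b, a, c, hab.symm, hbc, hac, h₁, h₃, h₂, h₄, h₆, h₅⟩

end HasInducedTransitiveTriangle

section Insertion

open List

variable {A : V → V → Prop} {v : V}

theorem exists_isChain_insert_head_eq_or_forall_not_rel {l : List V} (hc : l.IsChain A)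
    (hadj : ∀ y ∈ l, A y v ∨ A v y) :
    (∃ m : List V, m.IsChain A ∧ m.Perm (v :: l) ∧ m.head? = l.head?) ∨ ∀ y ∈ l, ¬ A y v := by
  induction l with
  | nil => exact Or.inr (by simp)
  | cons f t ih =>
    rcases ih hc.tail fun y hy => hadj y (mem_cons_of_mem f hy) with ⟨m, hm, hperm, hhead⟩ | hnot
    · refine Or.inl ⟨f :: m, hm.cons fun y hy => ?_, (hperm.cons f).trans (Perm.swap v f t), rfl⟩
      exact hc.rel_head? (hhead ▸ hy)
    · by_cases hfv : A f v
      · refine Or.inl ⟨f :: v :: t, isChain_cons_cons.2 ⟨hfv, hc.tail.cons fun y hy => ?_⟩,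
          Perm.swap v f t, rfl⟩
        have hy := mem_of_mem_head? hy
        exact (hadj y (mem_cons_of_mem f hy)).resolve_left (hnot y hy)
      · exact Or.inr (forall_mem_cons.2 ⟨hfv, hnot⟩)

theorem isChain_reverse_of_forall_dominated (hirr : ∀ x, ¬ A x x)
    (hT : ¬ HasInducedTransitiveTriangle A) {l : List V} (hc : l.IsChain A)
    (hdom : ∀ y ∈ l, A v y ∧ ¬ A y v) : l.reverse.IsChain A := by
  refine isChain_reverse.2 (hc.imp_of_mem_imp fun a b ha hb hab => ?_)
  by_contra hba
  have hne : ∀ {x y}, A x y → x ≠ y := fun h e => hirr _ (e ▸ h)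
  exact hT ⟨v, b, a, hne (hdom b hb).1, hne (hdom a ha).1, (hne hab).symm,
    (hdom b hb).1, (hdom a ha).1, hab, (hdom b hb).2, (hdom a ha).2, hba⟩

theorem exists_isChain_insert_of_head (hirr : ∀ x, ¬ A x x)
    (hT : ¬ HasInducedTransitiveTriangle A) {l : List V} {s : V} (hc : l.IsChain A)
    (hadj : ∀ y ∈ l, A y v ∨ A v y) (hs : l.head? = some s) :
    ∃ m : List V, m.IsChain A ∧ m.Perm (v :: l) ∧ m.IsEndpoint s := by
  rcases exists_isChain_insert_head_eq_or_forall_not_rel hc hadj with ⟨m, hm, hperm, hhead⟩ | hnot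
  · exact ⟨m, hm, hperm, Or.inl (hhead.trans hs)⟩
  -- `v` dominates `l`, so the arcs of `l` are digons and `v` can start the reversed path.
  have hdom : ∀ y ∈ l, A v y ∧ ¬ A y v :=
    fun y hy => ⟨(hadj y hy).resolve_left (hnot y hy), hnot y hy⟩
  refine ⟨v :: l.reverse, (isChain_reverse_of_forall_dominated hirr hT hc hdom).cons ?_,
    (reverse_perm l).cons v, Or.inr ?_⟩
  · exact fun y hy => (hdom y (mem_reverse.1 (mem_of_mem_head? hy))).1
  · rw [getLast?_cons, getLast?_reverse, hs]
    rfl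

theorem exists_isChain_insert_of_isEndpoint (hirr : ∀ x, ¬ A x x)
    (hT : ¬ HasInducedTransitiveTriangle A) {l : List V} {s : V} (hc : l.IsChain A)
    (hadj : ∀ y ∈ l, A y v ∨ A v y) (hs : l.IsEndpoint s) :
    ∃ m : List V, m.IsChain A ∧ m.Perm (v :: l) ∧ m.IsEndpoint s := by
  rcases hs with hs | hs
  · exact exists_isChain_insert_of_head hirr hT hc hadj hs
  obtain ⟨m, hm, hperm, hend⟩ := exists_isChain_insert_of_head (A := fun a b => A b a) hirr
    (fun h => hT h.of_flip) (isChain_reverse.2 hc) (fun y hy => (hadj y (mem_reverse.1 hy)).symm)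
    (by rwa [head?_reverse])
  exact ⟨m.reverse, isChain_reverse.2 hm,
    (reverse_perm m).trans (hperm.trans ((reverse_perm l).cons v)), hend.reverse⟩

theorem exists_isChain_insert_isEndpoint_self (hT : ¬ HasInducedTransitiveTriangle A)
    {l : List V} {f z : V} (hc : l.IsChain A) (hadj : ∀ y ∈ l, A y v ∨ A v y)
    (hf : l.head? = some f) (hz : l.getLast? = some z) (hfz : f ≠ z → A f z ∨ A z f) :
    ∃ m : List V, m.IsChain A ∧ m.Perm (v :: l) ∧ m.IsEndpoint v := by
  by_cases hzv : A z v
  · refine ⟨l ++ [v], hc.append (isChain_singleton v) ?_, perm_append_singleton v l,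
      Or.inr getLast?_concat⟩
    simp [hz, hzv]
  by_cases hvf : A v f
  · exact ⟨v :: l, hc.cons (by simp [hf, hvf]), Perm.refl _, Or.inl rfl⟩
  have hfv : A f v := (hadj f (mem_of_mem_head? hf)).resolve_right hvf
  have hvz : A v z := (hadj z (mem_of_getLast? hz)).resolve_left hzv
  have hne : f ≠ z := by rintro rfl; exact hzv hfv
  have hzf : A z f := by
    by_contra hzf
    exact hT ⟨f, z, v, hne, fun h => hvf (h ▸ hfv), fun h => hzv (h ▸ hvz),
      (hfz hne).resolve_right hzf, hfv, hvz, hzf, hvf, hzv⟩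
  -- `z → f` closes `l` into a cycle; reopen it at `f` and append `v`.
  obtain ⟨t, rfl⟩ : ∃ t, l = f :: t := ⟨l.tail, (cons_head?_tail hf).symm⟩
  refine ⟨t ++ [f] ++ [v], ?_, ?_, Or.inr getLast?_concat⟩
  · refine (hc.tail.append (isChain_singleton f) ?_).append (isChain_singleton v) ?_
    · intro x hx y hy
      rw [tail_cons, Option.mem_def] at hx
      rw [getLast?_cons, hx] at hz
      obtain rfl : f = y := by simpa using hy
      obtain rfl : x = z := Option.some.inj hz
      exact hzf
    · simp [hfv]
  · exact (perm_append_singleton v _).trans ((perm_append_singleton f t).cons v)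

end Insertion

section Partitions

open List

variable {A : V → V → Prop}

theorem IsDiPath.of_perm_cons {v : V} {l m : List V} (hm : m.IsChain A) (hperm : m.Perm (v :: l))
    (hnd : (v :: l).Nodup) : IsDiPath A m :=
  ⟨fun h => by simp [h] at hperm, hperm.nodup_iff.2 hnd, hm⟩

theorem isStable_singleton (u : V) : IsStable A {u} :=
  fun _ ha _ hb hne => (hne (ha.trans hb.symm)).elim

theorem IsMaxStable.nonempty [Nonempty V] {S : Set V} (hS : IsMaxStable A S) : S.Nonempty := by
  obtain ⟨u⟩ := ‹Nonempty V›
  apply Set.nonempty_of_ncard_ne_zero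
  have := hS.2 _ (isStable_singleton (A := A) u)
  rw [Set.ncard_singleton] at this
  omega

theorem IsMaxStable.semicomplete_of_ncard_eq_one {S : Set V} (hS : IsMaxStable A S)
    (h1 : S.ncard = 1) : Semicomplete A := by
  intro x y hxy
  by_contra hadj
  have hpair : IsStable A {x, y} := by
    rintro a (rfl | rfl) b (rfl | rfl) hab
    exacts [(hab rfl).elim, hadj, fun h => hadj h.symm, (hab rfl).elim]
  have := hS.2 _ hpair
  rw [Set.ncard_pair hxy, h1] at this
  omega

theorem IsMaxStable.singleton_of_ncard_eq_one {S : Set V} (hS : IsMaxStable A S)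
    (h1 : S.ncard = 1) (u : V) : IsMaxStable A {u} :=
  ⟨isStable_singleton u, fun T hT => by simpa [h1] using hS.2 T hT⟩

theorem IsSPartition.forall_mem_of_singleton {u : V} {P : Set (List V)}
    (hP : IsSPartition A {u} P) {l : List V} (hl : l ∈ P) (hu : u ∈ l) (x : V) : x ∈ l := by
  obtain ⟨l', ⟨hl', hx⟩, -⟩ := hP.1.2 x
  obtain ⟨s, ⟨hs, rfl⟩, -⟩ := hP.2 l' hl'
  obtain ⟨l'', -, huniq⟩ := hP.1.2 s
  rwa [huniq l ⟨hl, hu⟩, ← huniq l' ⟨hl', hs⟩]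

theorem isBEPartition_singleton {s : V} {m : List V} (hm : IsDiPath A m) (hall : ∀ x, x ∈ m)
    (hend : m.IsEndpoint s) : IsBEPartition A {s} {m} := by
  refine ⟨⟨⟨fun l hl => hl ▸ hm, fun x => ⟨m, ⟨rfl, hall x⟩, fun l hl => hl.1⟩⟩,
    fun l hl => ⟨s, ⟨hl ▸ hall s, rfl⟩, fun t ht => ht.2⟩⟩, ?_⟩
  rintro l rfl t - rfl
  exact hend

end Partitions

section InducedSubdigraph

open List

variable {A : V → V → Prop} {p : V → Prop}

theorem IsDiPath.map_val {l : List (Subtype p)}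
    (h : IsDiPath (fun a b : Subtype p => A a.1 b.1) l) : IsDiPath A (l.map Subtype.val) :=
  ⟨fun e => h.1 (map_eq_nil_iff.1 e), h.2.1.map Subtype.val_injective, (isChain_map _).2 h.2.2⟩

theorem IsStable.image_val {T : Set (Subtype p)}
    (h : IsStable (fun a b : Subtype p => A a.1 b.1) T) : IsStable A (Subtype.val '' T) := by
  rintro _ ⟨a, ha, rfl⟩ _ ⟨b, hb, rfl⟩ hne
  exact h a ha b hb fun e => hne (congrArg _ e)

theorem IsMaxStable.preimage_val {S : Set V} (h : IsMaxStable A S) (hS : ∀ x ∈ S, p x) :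
    IsMaxStable (fun a b : Subtype p => A a.1 b.1) (Subtype.val ⁻¹' S) := by
  refine ⟨fun a ha b hb hne => h.1 a ha b hb (Subtype.val_injective.ne hne), fun T hT => ?_⟩
  have hrange : S ⊆ Set.range (Subtype.val : Subtype p → V) := by
    rw [Subtype.range_coe_subtype]
    exact hS
  rw [Set.ncard_preimage_of_injective_subset_range Subtype.val_injective hrange]
  simpa [Set.ncard_image_of_injective _ Subtype.val_injective] using h.2 _ hT.image_val

end InducedSubdigraph

section UniversalVertex

open List

variable {A : V → V → Prop} {v : V}

theorem exists_isBEPartition_of_insert {S : Set V} {P : Set (List {u : V // u ≠ v})}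
    (hP : IsBEPartition (fun a b : {u : V // u ≠ v} => A a.1 b.1) (Subtype.val ⁻¹' S) P)
    (hvS : v ∉ S) {l₀ : List {u : V // u ≠ v}} (hl₀ : l₀ ∈ P) {s : {u : V // u ≠ v}}
    (hs : s ∈ l₀) (hsS : s.1 ∈ S) {m : List V} (hm : IsDiPath A m)
    (hperm : m.Perm (v :: l₀.map Subtype.val))
    (hend : m.IsEndpoint s.1) : ∃ Q, IsBEPartition A S Q := by
  classical
  let φ : List {u : V // u ≠ v} → List V := fun l => if l = l₀ then m else l.map Subtype.val
  have hφv : ∀ l, v ∈ φ l ↔ l = l₀ := by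
    intro l
    by_cases hl : l = l₀ <;> simp [φ, hl, hperm.mem_iff]
  have hφ : ∀ l x (hx : x ≠ v), x ∈ φ l ↔ ⟨x, hx⟩ ∈ l := by
    intro l x hx
    by_cases hl : l = l₀ <;> simp [φ, hl, hperm.mem_iff, hx]
  have hSv : ∀ t ∈ S, t ≠ v := fun t ht e => hvS (e ▸ ht)
  refine ⟨φ '' P, ⟨⟨⟨?_, fun x => ?_⟩, ?_⟩, ?_⟩⟩
  · rintro _ ⟨l, hl, rfl⟩
    by_cases h : l = l₀
    · simpa [φ, h] using hm
    · simpa [φ, h] using (hP.1.1.1 l hl).map_val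
  · by_cases hx : x = v
    · subst hx
      refine ⟨φ l₀, ⟨⟨l₀, hl₀, rfl⟩, (hφv l₀).2 rfl⟩, ?_⟩
      rintro _ ⟨⟨l, hl, rfl⟩, hvl⟩
      rw [(hφv l).1 hvl]
    · obtain ⟨l, ⟨hl, hxl⟩, huniq⟩ := hP.1.1.2 ⟨x, hx⟩
      refine ⟨φ l, ⟨⟨l, hl, rfl⟩, (hφ l x hx).2 hxl⟩, ?_⟩
      rintro _ ⟨⟨l', hl', rfl⟩, hxl'⟩
      rw [huniq l' ⟨hl', (hφ l' x hx).1 hxl'⟩]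
  · rintro _ ⟨l, hl, rfl⟩
    obtain ⟨t, ⟨htl, htS⟩, huniq⟩ := hP.1.2 l hl
    refine ⟨t.1, ⟨(hφ l t.1 t.2).2 htl, htS⟩, fun y ⟨hyl, hyS⟩ => ?_⟩
    exact congrArg Subtype.val (huniq ⟨y, hSv y hyS⟩ ⟨(hφ l y _).1 hyl, hyS⟩)
  · rintro _ ⟨l, hl, rfl⟩ y hyl hyS
    have hy := (hφ l y (hSv y hyS)).1 hyl
    change (φ l).IsEndpoint y
    by_cases h : l = l₀
    · subst h
      obtain rfl : (⟨y, hSv y hyS⟩ : {u // u ≠ v}) = s :=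
        (hP.1.2 l hl).unique ⟨hy, hyS⟩ ⟨hs, hsS⟩
      simpa [φ] using hend
    · simpa only [φ, if_neg h] using IsEndpoint.map (hP.2 l hl _ hy hyS) Subtype.val

end UniversalVertex

namespace IsUniversal

open List

variable {A : V → V → Prop} {v : V}

theorem exists_isBEPartition_of_mem (hT : ¬ HasInducedTransitiveTriangle A)
    (hu : IsUniversal A v) (h : BEProperty (fun a b : {u : V // u ≠ v} => A a.1 b.1))
    {S : Set V} (hS : IsMaxStable A S) (hvS : v ∈ S) : ∃ P, IsBEPartition A S P := by
  obtain rfl : S = {v} := Set.eq_singleton_iff_unique_mem.2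
    ⟨hvS, fun x hx => by_contra fun hne => hS.1 x hx v hvS hne (hu x hne)⟩
  have h1 : ({v} : Set V).ncard = 1 := Set.ncard_singleton v
  by_cases hV : ∀ x, x = v
  · exact ⟨{[v]}, isBEPartition_singleton ⟨by simp, nodup_singleton v, isChain_singleton v⟩
      (fun x => by simp [hV x]) (Or.inl rfl)⟩
  obtain ⟨u, huv⟩ := not_forall.1 hV
  have hpre : Subtype.val ⁻¹' {u} = ({⟨u, huv⟩} : Set {u : V // u ≠ v}) := by
    ext ⟨x, hx⟩
    simp
  obtain ⟨P, hP⟩ :=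
    h _ (hpre ▸ (hS.singleton_of_ncard_eq_one h1 u).preimage_val (by simpa using huv))
  obtain ⟨l₀, ⟨hl₀, hul₀⟩, -⟩ := hP.1.1.2 ⟨u, huv⟩
  have hpath := (hP.1.1.1 l₀ hl₀).map_val
  have hvl : v ∉ l₀.map Subtype.val := by simp
  obtain ⟨m, hm, hperm, hend⟩ := exists_isChain_insert_isEndpoint_self hT hpath.2.2
    (fun y hy => hu y (ne_of_mem_of_not_mem hy hvl)) (head?_eq_some_head hpath.1)
    (getLast?_eq_some_getLast hpath.1) (hS.semicomplete_of_ncard_eq_one h1 _ _)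
  refine ⟨{m}, isBEPartition_singleton (.of_perm_cons hm hperm (nodup_cons.2 ⟨hvl, hpath.2.1⟩))
    (fun x => ?_) hend⟩
  rw [hperm.mem_iff, mem_cons]
  by_cases hx : x = v
  · exact Or.inl hx
  · exact Or.inr (mem_map_of_mem (hP.1.forall_mem_of_singleton hl₀ hul₀ ⟨x, hx⟩))

theorem exists_isBEPartition_of_not_mem (hirr : ∀ x, ¬ A x x)
    (hT : ¬ HasInducedTransitiveTriangle A) (hu : IsUniversal A v)
    (h : BEProperty (fun a b : {u : V // u ≠ v} => A a.1 b.1))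
    {S : Set V} (hS : IsMaxStable A S) (hvS : v ∉ S) : ∃ P, IsBEPartition A S P := by
  have hSv : ∀ x ∈ S, x ≠ v := fun x hx e => hvS (e ▸ hx)
  obtain ⟨P, hP⟩ := h _ (hS.preimage_val hSv)
  have : Nonempty V := ⟨v⟩
  obtain ⟨s, hs⟩ := hS.nonempty
  obtain ⟨l₀, ⟨hl₀, hsl₀⟩, -⟩ := hP.1.1.2 ⟨s, hSv s hs⟩
  have hpath := (hP.1.1.1 l₀ hl₀).map_val
  have hvl : v ∉ l₀.map Subtype.val := by simp
  obtain ⟨m, hm, hperm, hend⟩ := exists_isChain_insert_of_isEndpoint hirr hT hpath.2.2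
    (fun y hy => hu y (ne_of_mem_of_not_mem hy hvl)) (IsEndpoint.map (hP.2 l₀ hl₀ _ hsl₀ hs) _)
  exact exists_isBEPartition_of_insert hP hvS hl₀ hsl₀ hs
    (.of_perm_cons hm hperm (nodup_cons.2 ⟨hvl, hpath.2.1⟩)) hperm hend

end IsUniversal

theorem universal_BEProperty_general {V : Type*} (A : V → V → Prop)
    (hirr : ∀ v, ¬ A v v)
    (hB : ¬ ∃ W : Set V, IsBlockingOddCycle (fun a b : W => A a.1 b.1))
    (v : V) (hu : IsUniversal A v)
    (h : BEProperty (fun a b : {u : V // u ≠ v} => A a.1 b.1)) :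
    BEProperty A := by
  have hT : ¬ HasInducedTransitiveTriangle A := fun hT => hB (hT.exists_isBlockingOddCycle hirr)
  intro S hS
  by_cases hvS : v ∈ S
  · exact hu.exists_isBEPartition_of_mem hT h hS hvS
  · exact hu.exists_isBEPartition_of_not_mem hirr hT h hS hvS

/-- Let `D` be a digraph with no induced blocking odd cycle and `v` a universal vertex.
If `D - v` satisfies the BE-property, then so does `D`. -/
theorem universal_BEProperty {V : Type*} [Finite V] (A : V → V → Prop)
    (hirr : ∀ v, ¬ A v v)
    (hB : ¬ ∃ W : Set V, IsBlockingOddCycle (fun a b : W => A a.1 b.1))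
    (v : V) (hu : IsUniversal A v)
    (h : BEProperty (fun a b : {u : V // u ≠ v} => A a.1 b.1)) :
    BEProperty A :=
  universal_BEProperty_general A hirr hB v hu h
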